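/- Let x be a non-periodic linearly recurrent sequence with constant K. Then the word complexity of x satisfies p_x(n) ≤ (K+1)·n for all n ≥ 1. -/

import Mathlib

/-- The factor of the sequence `x` starting at position `i` of length `n`. -/
def seqWord {A : Type*} (x : ℕ → A) (i n : ℕ) : List A :=
  (List.range n).map (fun k => x (i + k))

/-- The word `u` occurs in the sequence `x` at position `i`. -/
def occursAt {A : Type*} (x : ℕ → A) (u : List A) (i : ℕ) : Prop :=
  seqWord x i u.length = u

/-- `u` is a factor of the sequence `x`. -/
def IsFactor {A : Type*} (x : ℕ → A) (u : List A) : Prop :=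
  ∃ i, occursAt x u i

/-- `u` is a prefix of the sequence `x`. -/
def IsPrefixSeq {A : Type*} (u : List A) (x : ℕ → A) : Prop :=
  occursAt x u 0

/-- `x` is uniformly recurrent: every factor occurs in every sufficiently long window. -/
def UnifRec {A : Type*} (x : ℕ → A) : Prop :=
  ∀ u : List A, IsFactor x u → ∃ C, ∀ i, ∃ j, i ≤ j ∧ j < i + C ∧ occursAt x u j

/-- `w` is a return word to `u` in `x`: the factor between two consecutive occurrences of `u`. -/
def IsReturnWord {A : Type*} (x : ℕ → A) (u w : List A) : Prop :=
  ∃ i j, i < j ∧ occursAt x u i ∧ occursAt x u j ∧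
    (∀ k, i < k → k < j → ¬ occursAt x u k) ∧ w = seqWord x i (j - i)

/-- Apply a morphism (given on letters) to a word, by concatenation. -/
def morphApply {I A : Type*} (θ : I → List A) (l : List I) : List A :=
  (l.map θ).flatten

/-- Iterate an endomorphism `σ` of the free monoid `n` times on a word. -/
def morphIter {A : Type*} (σ : A → List A) : ℕ → List A → List A
  | 0, l => l
  | n + 1, l => morphApply σ (morphIter σ n l)

/-- `x` is ultimately periodic. -/
def UltPeriodic {A : Type*} (x : ℕ → A) : Prop :=
  ∃ p > 0, ∃ N, ∀ n ≥ N, x (n + p) = x n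

/-- `x` is linearly recurrent with constant `K`: it is uniformly recurrent and two
successive occurrences of any nonempty factor `u` differ by at most `K * |u|`. -/
def LinRec {A : Type*} (K : ℕ) (x : ℕ → A) : Prop :=
  UnifRec x ∧ ∀ u : List A, u ≠ [] → IsFactor x u →
    ∀ i, occursAt x u i → ∃ j, i < j ∧ j ≤ i + K * u.length ∧ occursAt x u j

/-- `σ` is prolongable on the letter `a`. -/
def Prolongable {A : Type*} (σ : A → List A) (a : A) : Prop :=
  (∃ t, σ a = a :: t ∧ t ≠ []) ∧
    Filter.Tendsto (fun n => (morphIter σ n [a]).length) Filter.atTop Filter.atTop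

/-- `σ` is growing: the image of each letter has length tending to infinity. -/
def Growing {A : Type*} (σ : A → List A) : Prop :=
  ∀ a, Filter.Tendsto (fun n => (morphIter σ n [a]).length) Filter.atTop Filter.atTop

/-- `σ` is primitive: some power sends every letter to a word containing every letter. -/
def Primitive {A : Type*} (σ : A → List A) : Prop :=
  ∃ n > 0, ∀ a b : A, b ∈ morphIter σ n [a]

/-- `x` is the fixed point `σ^∞(a)` of `σ`, prolongable on `a`. -/
def IsFixedPointOf {A : Type*} (σ : A → List A) (a : A) (x : ℕ → A) : Prop :=
  x 0 = a ∧ ∀ n, IsPrefixSeq (morphIter σ n [a]) x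

/-- The word `w` belongs to the language of the endomorphism `σ`. -/
def InLang {A : Type*} (σ : A → List A) (w : List A) : Prop :=
  ∃ a n, w <:+: morphIter σ n [a]

/-- The word `u` occurs at position `i` in the word `w`. -/
def listOccursAt {A : Type*} (w u : List A) (i : ℕ) : Prop :=
  i + u.length ≤ w.length ∧ (w.drop i).take u.length = u

/-- `|σ^k|`: the maximal length of the image of a letter under `σ^k`. -/
def maxLen {A : Type*} [Fintype A] [Nonempty A] (σ : A → List A) (k : ℕ) : ℕ :=
  Finset.univ.sup' Finset.univ_nonempty (fun a => (morphIter σ k [a]).length)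

/-- `⟨σ^k⟩`: the minimal length of the image of a letter under `σ^k`. -/
def minLen {A : Type*} [Fintype A] [Nonempty A] (σ : A → List A) (k : ℕ) : ℕ :=
  Finset.univ.inf' Finset.univ_nonempty (fun a => (morphIter σ k [a]).length)

/-- `(R, θ, z)` is the derived-sequence data of `x` on the prefix `u`: `θ 0, …, θ (R-1)`
enumerate the return words to `u` in order of first appearance in `x`, `z` is the derived
sequence, i.e. the coding of the decomposition of `x` into return words to `u`,
so that `Θ_{x,u}(z) = x`. -/
def IsDerivedSeq {A : Type*} (x : ℕ → A) (u : List A) (R : ℕ)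
    (θ : ℕ → List A) (z : ℕ → ℕ) : Prop :=
  (∀ i < R, IsReturnWord x u (θ i)) ∧
  (∀ w, IsReturnWord x u w → ∃ i < R, θ i = w) ∧
  (∀ i < R, ∀ j < R, i < j →
      sInf {k | occursAt x (θ i) k} < sInf {k | occursAt x (θ j) k}) ∧
  (∀ k, z k < R) ∧
  (∀ n, IsPrefixSeq (morphApply θ (seqWord z 0 n)) x)

/-!
Linear recurrence applied to the prefix of length `(K + 1) n` gives an occurrence of it at
some position `j` beyond any given occurrence of a factor `u` of length `n`; applied to `u`
it gives an occurrence of `u` in the window `[j, j + K n]`. That occurrence lies inside the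
copy of the prefix, so `u` already occurs at a position `d ≤ K n`. Hence the factors of
length `n` are among the `K n + 1` words `x[d, d + n)`, `d ≤ K n`, and `K n + 1 ≤ (K + 1) n`.
-/

lemma seqWord_length {A : Type*} (x : ℕ → A) (i n : ℕ) : (seqWord x i n).length = n := by
  simp [seqWord]

lemma seqWord_eq_seqWord_iff {A : Type*} {x : ℕ → A} {i j n : ℕ} :
    seqWord x i n = seqWord x j n ↔ ∀ t < n, x (i + t) = x (j + t) := by
  simp [seqWord, List.map_inj_left]

lemma occursAt_iff_eq_seqWord {A : Type*} {x : ℕ → A} {u : List A} {i : ℕ} :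
    occursAt x u i ↔ u = seqWord x i u.length :=
  eq_comm

lemma occursAt_seqWord_self {A : Type*} (x : ℕ → A) (i n : ℕ) :
    occursAt x (seqWord x i n) i := by
  rw [occursAt, seqWord_length]

lemma occursAt_sub_of_occursAt_prefix {A : Type*} {x : ℕ → A} {u : List A} {L j k : ℕ}
    (hj : occursAt x (seqWord x 0 L) j) (hk : occursAt x u k) (hjk : j ≤ k)
    (hkL : k + u.length ≤ j + L) : occursAt x u (k - j) := by
  rw [occursAt, seqWord_length, eq_comm, seqWord_eq_seqWord_iff] at hj
  rw [occursAt_iff_eq_seqWord] at hk ⊢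
  refine hk.trans (seqWord_eq_seqWord_iff.mpr fun t ht => ?_)
  have hcopy := hj (k - j + t) (by omega)
  rwa [Nat.zero_add, ← Nat.add_assoc, Nat.add_sub_cancel' hjk, eq_comm] at hcopy

namespace LinRec

variable {A : Type*} {K : ℕ} {x : ℕ → A}

lemma exists_occursAt_mem_Icc (hlr : LinRec K x) {u : List A} (hu : u ≠ []) {i : ℕ}
    (hi : occursAt x u i) {m : ℕ} (him : i ≤ m) :
    ∃ k ∈ Set.Icc m (m + K * u.length), occursAt x u k := by
  induction m, him using Nat.le_induction with
  | base => exact ⟨i, ⟨le_rfl, Nat.le_add_right _ _⟩, hi⟩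
  | succ m _ ih =>
    obtain ⟨k, ⟨hmk, hkm⟩, hk⟩ := ih
    rcases Nat.lt_or_ge k (m + 1) with hkm' | hkm'
    · obtain ⟨k', hkk', hk'k, hk'⟩ := hlr.2 u hu ⟨k, hk⟩ k hk
      exact ⟨k', ⟨by omega, by omega⟩, hk'⟩
    · exact ⟨k, ⟨hkm', by omega⟩, hk⟩

lemma exists_occursAt_ge (hlr : LinRec K x) {u : List A} (hu : u ≠ []) {i : ℕ}
    (hi : occursAt x u i) (m : ℕ) : ∃ j, m ≤ j ∧ occursAt x u j := by
  obtain ⟨j, ⟨hmj, -⟩, hj⟩ := hlr.exists_occursAt_mem_Icc hu hi (le_max_right m i)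
  exact ⟨j, (le_max_left m i).trans hmj, hj⟩

lemma exists_occursAt_le (hlr : LinRec K x) {u : List A} (hu : u ≠ [])
    (hfac : IsFactor x u) : ∃ d ≤ K * u.length, occursAt x u d := by
  obtain ⟨i, hi⟩ := hfac
  have hprefix_ne : seqWord x 0 ((K + 1) * u.length) ≠ [] := by
    rw [← List.length_pos_iff, seqWord_length]
    exact Nat.mul_pos (Nat.succ_pos K) (List.length_pos_iff.mpr hu)
  obtain ⟨j, hij, hj⟩ := hlr.exists_occursAt_ge hprefix_ne (occursAt_seqWord_self x 0 _) i
  obtain ⟨k, ⟨hjk, hkj⟩, hk⟩ := hlr.exists_occursAt_mem_Icc hu hi hij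
  refine ⟨k - j, by omega, occursAt_sub_of_occursAt_prefix hj hk hjk ?_⟩
  rw [Nat.add_mul, Nat.one_mul]
  omega

end LinRec

theorem complexity_bound_general {A : Type*} (x : ℕ → A)
    (K : ℕ) (hlr : LinRec K x) :
    ∀ n : ℕ, 1 ≤ n →
      {u : List A | u.length = n ∧ IsFactor x u}.ncard ≤ (K + 1) * n := by
  intro n hn
  have hsub : {u : List A | u.length = n ∧ IsFactor x u} ⊆
      (fun d => seqWord x d n) '' ↑(Finset.range (K * n + 1)) := by
    rintro u ⟨rfl, hfac⟩
    obtain ⟨d, hd, hud⟩ := hlr.exists_occursAt_le (List.length_pos_iff.mp hn) hfac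
    exact ⟨d, Finset.mem_range.mpr (by omega), hud⟩
  calc {u : List A | u.length = n ∧ IsFactor x u}.ncard
      ≤ ((fun d => seqWord x d n) '' ↑(Finset.range (K * n + 1))).ncard :=
        Set.ncard_le_ncard hsub ((Finset.finite_toSet _).image _)
    _ ≤ (Finset.range (K * n + 1) : Set ℕ).ncard := Set.ncard_image_le (Finset.finite_toSet _)
    _ = K * n + 1 := by rw [Set.ncard_coe_finset, Finset.card_range]
    _ ≤ (K + 1) * n := by rw [Nat.add_mul, Nat.one_mul]; omega

/-- Theorem (Durand–Host–Skau): a non-periodic linearly recurrent sequence with constant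
`K` has word complexity `p_x(n) ≤ (K+1)·n` for all `n ≥ 1`. -/
theorem complexity_bound {A : Type*} [Fintype A] (x : ℕ → A)
    (K : ℕ) (hlr : LinRec K x) (hnp : ¬ UltPeriodic x) :
    ∀ n : ℕ, 1 ≤ n →
      {u : List A | u.length = n ∧ IsFactor x u}.ncard ≤ (K + 1) * n :=
  complexity_bound_general x K hlr
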